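/- Suppose L is a Cameron-Liebler line class with parameter x in PG(3,q) such that for every plane π the number of lines of L contained in π is congruent to n modulo q+1, and for every point P the number of lines of L through P is congruent to x−n modulo q+1. If for each plane of weight w (w lines of L in it) and each point of weight u (u lines of L through it) with the point on the plane, the pencil of lines through the point in the plane contains exactly (w+u−x)/(q+1) lines of L, then binom(x,2) + n(n−x) ≡ 0 (mod q+1). -/
import Mathlib

open Module Finset

abbrev PGPoint (F : Type*) [Field F] := Projectivization F (Fin 4 → F)

def PGLine (F : Type*) [Field F] : Type _ :=
  {W : Submodule F (Fin 4 → F) // Module.finrank F W = 2}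

def PGPlane (F : Type*) [Field F] : Type _ :=
  {W : Submodule F (Fin 4 → F) // Module.finrank F W = 3}

def PointOnLine {F : Type*} [Field F] (P : PGPoint F) (ℓ : PGLine F) : Prop :=
  P.submodule ≤ ℓ.1

def LineInPlane {F : Type*} [Field F] (ℓ : PGLine F) (π : PGPlane F) : Prop :=
  ℓ.1 ≤ π.1

def PointOnPlane {F : Type*} [Field F] (P : PGPoint F) (π : PGPlane F) : Prop :=
  P.submodule ≤ π.1

def IsSpread {F : Type*} [Field F] (S : Set (PGLine F)) : Prop :=
  ∀ P : PGPoint F, ∃! ℓ : PGLine F, ℓ ∈ S ∧ PointOnLine P ℓ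

def IsCameronLiebler {F : Type*} [Field F] (L : Set (PGLine F)) (x : ℕ) : Prop :=
  ∀ S : Set (PGLine F), IsSpread S → (S ∩ L).ncard = x


namespace CLaux

set_option linter.unusedSectionVars false

attribute [local instance] Classical.propDecidable

variable {F : Type*} [Field F] [Fintype F]

section generic
variable {M : Type*} [AddCommGroup M] [Module F M] [Finite M]

instance : Finite (Submodule F M) :=
  Finite.of_injective (fun W => (W : Set M)) SetLike.coe_injective

instance : Module.Finite F M := Module.Finite.of_finite

noncomputable instance : Fintype M := Fintype.ofFinite M

instance : Finite (Projectivization F M) :=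
  Quotient.finite _

noncomputable instance : Fintype (Projectivization F M) := Fintype.ofFinite _

lemma eq_mk_of_mem {P : Projectivization F M} {v : M} (hv : v ≠ 0)
    (h : v ∈ P.submodule) : P = Projectivization.mk F v hv := by
  apply Projectivization.submodule_injective
  rw [Projectivization.submodule_mk]
  refine (Submodule.eq_of_le_of_finrank_eq ?_ ?_).symm
  · rwa [Submodule.span_singleton_le_iff_mem]
  · rw [finrank_span_singleton hv, P.finrank_submodule]

/-- fundamental count of points of projective space over finite field -/
lemma card_proj_mul {q : ℕ} (hF : Fintype.card F = q) :
    Nat.card (Projectivization F M) * (q - 1) + 1 = q ^ finrank F M := by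
  classical
  have e : (Σ P : Projectivization F M, {v : M // v ∈ P.submodule ∧ v ≠ 0}) ≃
      {v : M // v ≠ 0} := by
    refine Equiv.ofBijective (fun t => ⟨t.2.1, t.2.2.2⟩) ⟨?_, ?_⟩
    · rintro ⟨P, v, hv, hv0⟩ ⟨P', v', hv', hv0'⟩ h
      simp only [Subtype.mk_eq_mk] at h
      subst h
      have : P = P' := by
        rw [eq_mk_of_mem hv0 hv, eq_mk_of_mem hv0 hv']
      subst this; rfl
    · rintro ⟨v, hv⟩
      exact ⟨⟨Projectivization.mk F v hv,
        ⟨v, by rw [Projectivization.submodule_mk]; exact Submodule.mem_span_singleton_self v, hv⟩⟩, rfl⟩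
  have hfib : ∀ P : Projectivization F M,
      Fintype.card {v : M // v ∈ P.submodule ∧ v ≠ 0} = q - 1 := by
    intro P
    have e2 : {v : M // v ∈ P.submodule ∧ v ≠ 0} ≃ {w : P.submodule // w ≠ 0} :=
      { toFun := fun v => ⟨⟨v.1, v.2.1⟩, fun h => v.2.2 (congrArg Subtype.val h)⟩
        invFun := fun w => ⟨w.1.1, w.1.2, fun h => w.2 (Subtype.ext h)⟩
        left_inv := fun v => rfl
        right_inv := fun w => rfl }
    rw [Fintype.card_congr e2]
    have hc : Fintype.card P.submodule = q := by
      rw [card_eq_pow_finrank (K := F), hF, P.finrank_submodule, pow_one]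
    rw [Fintype.card_subtype_compl, hc]
    simp
  have hnz : Fintype.card {v : M // v ≠ 0} = q ^ finrank F M - 1 := by
    rw [Fintype.card_subtype_compl, ← hF, ← card_eq_pow_finrank (K := F) (V := M)]
    simp
  have := Fintype.card_congr e
  rw [Fintype.card_sigma, hnz] at this
  simp only [hfib, Finset.sum_const, smul_eq_mul] at this
  have hq1 : 1 ≤ q ^ finrank F M := Nat.one_le_pow _ _ (by
    have : 2 ≤ q := hF ▸ Fintype.one_lt_card
    omega)
  rw [Nat.card_eq_fintype_card]
  rw [Finset.card_univ] at this
  omega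

instance (p : Submodule F M) : Finite (M ⧸ p) := Quotient.finite _

/-- points below a submodule are the projectivization of the submodule -/
noncomputable def pointsLEEquiv (W : Submodule F M) :
    Projectivization F W ≃ {P : Projectivization F M // P.submodule ≤ W} := by
  refine Equiv.ofBijective (fun Q => ⟨Projectivization.mk F (Q.rep : M)
    (fun h => Q.rep_nonzero (Subtype.ext h)), ?_⟩) ⟨?_, ?_⟩
  · rw [Projectivization.submodule_mk, Submodule.span_singleton_le_iff_mem]
    exact Q.rep.2
  · intro Q Q' h
    simp only [Subtype.mk_eq_mk] at h
    rw [Projectivization.mk_eq_mk_iff] at h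
    obtain ⟨a, ha⟩ := h
    have : a • Q'.rep = Q.rep := Subtype.ext ha
    conv_lhs => rw [← Q.mk_rep]
    conv_rhs => rw [← Q'.mk_rep]
    rw [Projectivization.mk_eq_mk_iff]
    exact ⟨a, this⟩
  · rintro ⟨P, hP⟩
    have hrep : P.rep ∈ W := hP (by
      rw [Projectivization.submodule_eq]; exact Submodule.mem_span_singleton_self _)
    set w : W := ⟨P.rep, hrep⟩ with hwdef
    have hw : w ≠ 0 := fun h => P.rep_nonzero (congrArg Subtype.val h)
    refine ⟨Projectivization.mk F w hw, ?_⟩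
    apply Subtype.ext
    obtain ⟨a, ha⟩ := Projectivization.exists_smul_eq_mk_rep F w hw
    have ha' : ((Projectivization.mk F w hw).rep : M) = a • P.rep := by
      rw [← ha]; rfl
    dsimp only
    conv_rhs => rw [← P.mk_rep]
    rw [Projectivization.mk_eq_mk_iff]
    exact ⟨a, ha'.symm⟩

lemma card_pointsLE {q : ℕ} (hF : Fintype.card F = q) (W : Submodule F M) :
    Nat.card {P : Projectivization F M // P.submodule ≤ W} * (q - 1) + 1
      = q ^ finrank F W := by
  rw [← Nat.card_congr (pointsLEEquiv W)]
  exact card_proj_mul hF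

lemma finrank_comap_mkQ (p : Submodule F M) (U : Submodule F (M ⧸ p)) :
    finrank F (U.comap p.mkQ) = finrank F U + finrank F p := by
  have h := LinearMap.finrank_range_add_finrank_ker (p.mkQ.domRestrict (U.comap p.mkQ))
  rw [LinearMap.range_domRestrict, LinearMap.ker_domRestrict, Submodule.ker_mkQ,
    Submodule.map_comap_eq_self (by rw [Submodule.range_mkQ]; exact le_top)] at h
  rw [← h, (Submodule.comapSubtypeEquivOfLe (Submodule.le_comap_mkQ p U)).finrank_eq]

lemma finrank_map_mkQ {p H : Submodule F M} (hpH : p ≤ H) :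
    finrank F (H.map p.mkQ) + finrank F p = finrank F H := by
  have := finrank_comap_mkQ p (H.map p.mkQ)
  rw [Submodule.comap_map_mkQ, sup_eq_right.2 hpH] at this
  omega

/-- submodules above p of rank (finrank p + j) correspond to rank-j submodules of quotient -/
noncomputable def aboveEquiv (p : Submodule F M) (j : ℕ) :
    {H : Submodule F M // p ≤ H ∧ finrank F H = finrank F p + j} ≃
      {U : Submodule F (M ⧸ p) // finrank F U = j} := by
  refine Equiv.ofBijective (fun H => ⟨H.1.map p.mkQ, ?_⟩) ⟨?_, ?_⟩
  · have := finrank_map_mkQ H.2.1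
    have h2 := H.2.2
    omega
  · rintro ⟨H, hH, hr⟩ ⟨H', hH', hr'⟩ h
    simp only [Subtype.mk_eq_mk] at h ⊢
    have : Submodule.comap p.mkQ (H.map p.mkQ) = Submodule.comap p.mkQ (H'.map p.mkQ) := by
      rw [h]
    rwa [Submodule.comap_map_mkQ, Submodule.comap_map_mkQ, sup_eq_right.2 hH,
      sup_eq_right.2 hH'] at this
  · rintro ⟨U, hU⟩
    refine ⟨⟨U.comap p.mkQ, Submodule.le_comap_mkQ p U, by rw [finrank_comap_mkQ, hU]; omega⟩, ?_⟩
    simp only [Subtype.mk_eq_mk]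
    exact Submodule.map_comap_eq_self (by rw [Submodule.range_mkQ]; exact le_top)

lemma count_cancel {q t s : ℕ} (hq : 2 ≤ q) (h : t * (q-1) + 1 = s * (q-1) + 1) : t = s :=
  Nat.eq_of_mul_eq_mul_right (by omega) (Nat.add_right_cancel h)

lemma qsq_helper {q : ℕ} (hq : 2 ≤ q) : (q+1) * (q-1) + 1 = q ^ 2 := by
  obtain ⟨m, rfl⟩ : ∃ m, q = m + 1 := ⟨q - 1, by omega⟩
  simp only [Nat.add_sub_cancel]
  ring

lemma qcube_helper {q : ℕ} (hq : 2 ≤ q) : (q^2+q+1) * (q-1) + 1 = q ^ 3 := by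
  obtain ⟨m, rfl⟩ : ∃ m, q = m + 1 := ⟨q - 1, by omega⟩
  simp only [Nat.add_sub_cancel]
  ring

variable {q : ℕ}

lemma two_le_q (hF : Fintype.card F = q) : 2 ≤ q := hF ▸ Fintype.one_lt_card

lemma card_proj_dim2 (hF : Fintype.card F = q) (h2 : finrank F M = 2) :
    Nat.card (Projectivization F M) = q + 1 := by
  have h := card_proj_mul (M := M) hF
  rw [h2] at h
  exact count_cancel (two_le_q hF) (h.trans (qsq_helper (two_le_q hF)).symm)

lemma card_proj_dim3 (hF : Fintype.card F = q) (h3 : finrank F M = 3) :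
    Nat.card (Projectivization F M) = q^2 + q + 1 := by
  have h := card_proj_mul (M := M) hF
  rw [h3] at h
  exact count_cancel (two_le_q hF) (h.trans (qcube_helper (two_le_q hF)).symm)

lemma card_pointsLE_dim2 (hF : Fintype.card F = q) {W : Submodule F M}
    (h2 : finrank F W = 2) :
    Nat.card {P : Projectivization F M // P.submodule ≤ W} = q + 1 := by
  have h := card_pointsLE hF W
  rw [h2] at h
  exact count_cancel (two_le_q hF) (h.trans (qsq_helper (two_le_q hF)).symm)

lemma card_pointsLE_dim3 (hF : Fintype.card F = q) {W : Submodule F M}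
    (h3 : finrank F W = 3) :
    Nat.card {P : Projectivization F M // P.submodule ≤ W} = q^2 + q + 1 := by
  have h := card_pointsLE hF W
  rw [h3] at h
  exact count_cancel (two_le_q hF) (h.trans (qcube_helper (two_le_q hF)).symm)

/-- submodules above p with given dimension, as points of the quotient projectivization -/
lemma card_above (p : Submodule F M) (j : ℕ) :
    Nat.card {H : Submodule F M // p ≤ H ∧ finrank F H = finrank F p + j}
      = Nat.card {U : Submodule F (M ⧸ p) // finrank F U = j} :=
  Nat.card_congr (aboveEquiv p j)

lemma sum_filter_swap {α β : Type*} [Fintype α] [Fintype β] (r : α → β → Prop) :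
    ∑ a : α, (Finset.univ.filter (fun b => r a b)).card
      = ∑ b : β, (Finset.univ.filter (fun a => r a b)).card := by
  simp only [Finset.card_filter]
  exact Finset.sum_comm

lemma card_rank1 (hF : Fintype.card F = q) :
    Nat.card {H : Submodule F M // finrank F H = 1} = Nat.card (Projectivization F M) :=
  (Nat.card_congr (Projectivization.equivSubmodule F M)).symm

lemma card_rank2_dim3 (hF : Fintype.card F = q) (h3 : finrank F M = 3) :
    Nat.card {H : Submodule F M // finrank F H = 2} = q^2 + q + 1 := by
  classical
  have key : ∑ H : {H : Submodule F M // finrank F H = 2},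
        (Finset.univ.filter (fun P : Projectivization F M => P.submodule ≤ H.1)).card
      = ∑ P : Projectivization F M,
        (Finset.univ.filter (fun H : {H : Submodule F M // finrank F H = 2} =>
          P.submodule ≤ H.1)).card :=
    sum_filter_swap _
  have hleft : ∀ H : {H : Submodule F M // finrank F H = 2},
      (Finset.univ.filter (fun P : Projectivization F M => P.submodule ≤ H.1)).card = q + 1 := by
    intro H
    rw [← Fintype.card_subtype, ← Nat.card_eq_fintype_card]
    exact card_pointsLE_dim2 hF H.2
  have hright : ∀ P : Projectivization F M,
      (Finset.univ.filter (fun H : {H : Submodule F M // finrank F H = 2} =>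
        P.submodule ≤ H.1)).card = q + 1 := by
    intro P
    rw [← Fintype.card_subtype, ← Nat.card_eq_fintype_card]
    have e : {H : {H : Submodule F M // finrank F H = 2} // P.submodule ≤ H.1} ≃
        {H : Submodule F M // P.submodule ≤ H ∧ finrank F H = finrank F P.submodule + 1} := by
      refine (Equiv.subtypeSubtypeEquivSubtypeInter _ _).trans (Equiv.subtypeEquivRight ?_)
      intro H
      rw [P.finrank_submodule]
      tauto
    rw [Nat.card_congr e, card_above, card_rank1 hF]
    refine card_proj_dim2 hF ?_
    have := Submodule.finrank_quotient_add_finrank P.submodule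
    rw [h3, P.finrank_submodule] at this
    omega
  simp only [hleft, hright, Finset.sum_const, Finset.card_univ, smul_eq_mul] at key
  have hcard : Fintype.card (Projectivization F M) = q^2 + q + 1 := by
    rw [← Nat.card_eq_fintype_card]
    exact card_proj_dim3 hF h3
  rw [hcard] at key
  rw [Nat.card_eq_fintype_card]
  exact Nat.eq_of_mul_eq_mul_right (by omega) key

end generic

section pg3
variable {F : Type*} [Field F] [Fintype F] {q : ℕ}

instance : Finite (PGLine F) := by unfold PGLine; infer_instance
noncomputable instance : Fintype (PGLine F) := Fintype.ofFinite _
instance : Finite (PGPlane F) := by unfold PGPlane; infer_instance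
noncomputable instance : Fintype (PGPlane F) := Fintype.ofFinite _
noncomputable instance : Fintype (PGPoint F) := Fintype.ofFinite _

lemma frV : finrank F (Fin 4 → F) = 4 := Module.finrank_fin_fun F

lemma card_points_on_line (hF : Fintype.card F = q) (ℓ : PGLine F) :
    Nat.card {P : PGPoint F // PointOnLine P ℓ} = q + 1 :=
  card_pointsLE_dim2 hF ℓ.2

lemma card_points_on_plane (hF : Fintype.card F = q) (π : PGPlane F) :
    Nat.card {P : PGPoint F // PointOnPlane P π} = q^2 + q + 1 :=
  card_pointsLE_dim3 hF π.2

lemma card_planes_through_line (hF : Fintype.card F = q) (ℓ : PGLine F) :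
    Nat.card {π : PGPlane F // LineInPlane ℓ π} = q + 1 := by
  have e : {π : PGPlane F // LineInPlane ℓ π} ≃
      {H : Submodule F (Fin 4 → F) // ℓ.1 ≤ H ∧ finrank F H = finrank F ℓ.1 + 1} := by
    refine (Equiv.subtypeSubtypeEquivSubtypeInter _ _).trans (Equiv.subtypeEquivRight ?_)
    intro H
    rw [ℓ.2]
    tauto
  rw [Nat.card_congr e, card_above, card_rank1 hF]
  refine card_proj_dim2 hF ?_
  have := Submodule.finrank_quotient_add_finrank ℓ.1
  rw [frV, ℓ.2] at this
  omega

lemma card_planes_through_point (hF : Fintype.card F = q) (P : PGPoint F) :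
    Nat.card {π : PGPlane F // PointOnPlane P π} = q^2 + q + 1 := by
  have e : {π : PGPlane F // PointOnPlane P π} ≃
      {H : Submodule F (Fin 4 → F) // P.submodule ≤ H ∧
        finrank F H = finrank F P.submodule + 2} := by
    refine (Equiv.subtypeSubtypeEquivSubtypeInter _ _).trans (Equiv.subtypeEquivRight ?_)
    intro H
    rw [P.finrank_submodule]
    tauto
  rw [Nat.card_congr e, card_above]
  refine card_rank2_dim3 hF ?_
  have := Submodule.finrank_quotient_add_finrank P.submodule
  rw [frV, P.finrank_submodule] at this
  omega

lemma inf_rank_one {ℓ ℓ' : PGLine F} (hne : ℓ ≠ ℓ') (hd : finrank F ↥(ℓ.1 ⊔ ℓ'.1) ≤ 3) :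
    finrank F ↥(ℓ.1 ⊓ ℓ'.1) = 1 := by
  have hsum := Submodule.finrank_sup_add_finrank_inf_eq ℓ.1 ℓ'.1
  rw [ℓ.2, ℓ'.2] at hsum
  have hle : finrank F ↥(ℓ.1 ⊓ ℓ'.1) ≤ 2 := by
    have h' := Submodule.finrank_mono (inf_le_left (a := ℓ.1) (b := ℓ'.1))
    rw [ℓ.2] at h'
    omega
  rcases Nat.lt_or_ge (finrank F ↥(ℓ.1 ⊓ ℓ'.1)) 2 with h | h
  · omega
  · exfalso
    have h2 : finrank F ↥(ℓ.1 ⊓ ℓ'.1) = 2 := le_antisymm hle h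
    have e1 : ℓ.1 ⊓ ℓ'.1 = ℓ.1 :=
      Submodule.eq_of_le_of_finrank_eq inf_le_left (by rw [h2, ℓ.2])
    have e2 : ℓ.1 ⊓ ℓ'.1 = ℓ'.1 :=
      Submodule.eq_of_le_of_finrank_eq inf_le_right (by rw [h2, ℓ'.2])
    exact hne (Subtype.ext (e1.symm.trans e2))

/-- two distinct lines in a common plane meet in a unique point -/
lemma lines_in_plane_meet {ℓ ℓ' : PGLine F} (hne : ℓ ≠ ℓ') {π : PGPlane F}
    (h : LineInPlane ℓ π) (h' : LineInPlane ℓ' π) :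
    ∃! P : PGPoint F, PointOnLine P ℓ ∧ PointOnLine P ℓ' := by
  have hsup : finrank F ↥(ℓ.1 ⊔ ℓ'.1) ≤ 3 := by
    have hle : ℓ.1 ⊔ ℓ'.1 ≤ π.1 := sup_le h h'
    have := Submodule.finrank_mono hle
    rw [π.2] at this
    exact this
  have h1 := inf_rank_one hne hsup
  refine ⟨Projectivization.mk'' (ℓ.1 ⊓ ℓ'.1) h1, ⟨?_, ?_⟩, ?_⟩
  · show _ ≤ _
    rw [Projectivization.submodule_mk'']
    exact inf_le_left
  · show _ ≤ _
    rw [Projectivization.submodule_mk'']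
    exact inf_le_right
  · rintro Q ⟨hQ, hQ'⟩
    apply Projectivization.submodule_injective
    rw [Projectivization.submodule_mk'']
    exact Submodule.eq_of_le_of_finrank_eq (le_inf hQ hQ')
      (by rw [Q.finrank_submodule, h1])

/-- two distinct lines through a common point lie in a unique plane -/
lemma lines_through_point_span {ℓ ℓ' : PGLine F} (hne : ℓ ≠ ℓ') {P : PGPoint F}
    (h : PointOnLine P ℓ) (h' : PointOnLine P ℓ') :
    ∃! π : PGPlane F, LineInPlane ℓ π ∧ LineInPlane ℓ' π := by
  have hinf1 : 1 ≤ finrank F ↥(ℓ.1 ⊓ ℓ'.1) := by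
    have hP : P.submodule ≤ ℓ.1 ⊓ ℓ'.1 := le_inf h h'
    have := Submodule.finrank_mono hP
    rw [P.finrank_submodule] at this
    exact this
  have hsum := Submodule.finrank_sup_add_finrank_inf_eq ℓ.1 ℓ'.1
  rw [ℓ.2, ℓ'.2] at hsum
  have hinf : finrank F ↥(ℓ.1 ⊓ ℓ'.1) = 1 := by
    rcases Nat.lt_or_ge (finrank F ↥(ℓ.1 ⊓ ℓ'.1)) 2 with hc | hc
    · omega
    · exfalso
      have hle : finrank F ↥(ℓ.1 ⊓ ℓ'.1) ≤ 2 := by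
        have h' := Submodule.finrank_mono (inf_le_left (a := ℓ.1) (b := ℓ'.1))
        rw [ℓ.2] at h'
        omega
      have h2 : finrank F ↥(ℓ.1 ⊓ ℓ'.1) = 2 := le_antisymm hle hc
      have e1 : ℓ.1 ⊓ ℓ'.1 = ℓ.1 :=
        Submodule.eq_of_le_of_finrank_eq inf_le_left (by rw [h2, ℓ.2])
      have e2 : ℓ.1 ⊓ ℓ'.1 = ℓ'.1 :=
        Submodule.eq_of_le_of_finrank_eq inf_le_right (by rw [h2, ℓ'.2])
      exact hne (Subtype.ext (e1.symm.trans e2))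
  have hsup : finrank F ↥(ℓ.1 ⊔ ℓ'.1) = 3 := by omega
  refine ⟨⟨ℓ.1 ⊔ ℓ'.1, hsup⟩, ⟨le_sup_left, le_sup_right⟩, ?_⟩
  rintro π ⟨h1, h2⟩
  apply Subtype.ext
  exact (Submodule.eq_of_le_of_finrank_eq (sup_le h1 h2) (by rw [hsup, π.2])).symm

lemma planes_inf_rank2 {π π' : PGPlane F} (hne : π ≠ π') :
    finrank F ↥(π.1 ⊓ π'.1) = 2 := by
  have hsum := Submodule.finrank_sup_add_finrank_inf_eq π.1 π'.1
  rw [π.2, π'.2] at hsum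
  have hle4 : finrank F ↥(π.1 ⊔ π'.1) ≤ 4 := by
    have := Submodule.finrank_le (π.1 ⊔ π'.1)
    rwa [frV] at this
  have hge : 3 ≤ finrank F ↥(π.1 ⊔ π'.1) := by
    have := Submodule.finrank_mono (le_sup_left (a := π.1) (b := π'.1))
    rw [π.2] at this
    omega
  rcases Nat.lt_or_ge (finrank F ↥(π.1 ⊔ π'.1)) 4 with hc | hc
  · exfalso
    have h3 : finrank F ↥(π.1 ⊔ π'.1) = 3 := by omega
    have e1 : π.1 = π.1 ⊔ π'.1 :=
      Submodule.eq_of_le_of_finrank_eq le_sup_left (by rw [h3, π.2])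
    have e2 : π'.1 = π.1 ⊔ π'.1 :=
      Submodule.eq_of_le_of_finrank_eq le_sup_right (by rw [h3, π'.2])
    exact hne (Subtype.ext (e1.trans e2.symm))
  · omega

lemma card_common_points (hF : Fintype.card F = q) {π π' : PGPlane F} (hne : π ≠ π') :
    Nat.card {P : PGPoint F // PointOnPlane P π ∧ PointOnPlane P π'} = q + 1 := by
  have e : {P : PGPoint F // PointOnPlane P π ∧ PointOnPlane P π'} ≃
      {P : PGPoint F // P.submodule ≤ π.1 ⊓ π'.1} :=
    Equiv.subtypeEquivRight (fun P => le_inf_iff.symm)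
  rw [Nat.card_congr e]
  exact card_pointsLE_dim2 hF (planes_inf_rank2 hne)

end pg3


section incidence
variable {F : Type*} [Field F] [Fintype F] {q : ℕ}

lemma card_filter_eq_nat_card {α : Type*} [Fintype α] (p : α → Prop) [DecidablePred p] :
    (Finset.univ.filter p).card = Nat.card {a // p a} := by
  rw [Nat.card_eq_fintype_card, Fintype.card_subtype]

lemma sum_card_filter_comm {α β : Type*} (s : Finset α) (t : Finset β) (r : α → β → Prop)
    [inst : ∀ a b, Decidable (r a b)] :
    ∑ a ∈ s, (t.filter (fun b => r a b)).card = ∑ b ∈ t, (s.filter (fun a => r a b)).card := by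
  simp only [Finset.card_filter]
  exact Finset.sum_comm

lemma choose_two_filter {α : Type*} (s : Finset α) (pr : α → Prop) [DecidablePred pr]
    [inst2 : DecidablePred (fun t : Finset α => ∀ a ∈ t, pr a)] :
    ((s.filter pr).card).choose 2
      = ((s.powersetCard 2).filter (fun t => ∀ a ∈ t, pr a)).card := by
  rw [← Finset.card_powersetCard]
  congr 1
  ext t
  simp only [Finset.mem_powersetCard, Finset.mem_filter]
  constructor
  · rintro ⟨hsub, hc⟩
    exact ⟨⟨fun a ha => (Finset.mem_filter.1 (hsub ha)).1, hc⟩,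
      fun a ha => (Finset.mem_filter.1 (hsub ha)).2⟩
  · rintro ⟨⟨hsub, hc⟩, hall⟩
    exact ⟨fun a ha => Finset.mem_filter.2 ⟨hsub ha, hall a ha⟩, hc⟩

variable (L : Set (PGLine F))

/-- the finset of points of a plane -/
noncomputable def pts (π : PGPlane F) : Finset (PGPoint F) :=
  Finset.univ.filter (fun P => PointOnPlane P π)

/-- the finset of planes through a point -/
noncomputable def planes (P : PGPoint F) : Finset (PGPlane F) :=
  Finset.univ.filter (fun π => PointOnPlane P π)

/-- the finset of lines of L in a plane -/
noncomputable def linesIn (π : PGPlane F) : Finset (PGLine F) :=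
  Finset.univ.filter (fun ℓ => ℓ ∈ L ∧ LineInPlane ℓ π)

/-- the finset of lines of L through a point -/
noncomputable def linesThru (P : PGPoint F) : Finset (PGLine F) :=
  Finset.univ.filter (fun ℓ => ℓ ∈ L ∧ PointOnLine P ℓ)

lemma ncard_linesIn (π : PGPlane F) :
    ({ℓ ∈ L | LineInPlane ℓ π} : Set (PGLine F)).ncard = (linesIn L π).card := by
  rw [Set.ncard_eq_toFinset_card']
  congr 1
  ext ℓ
  simp [linesIn, Set.mem_toFinset]

lemma ncard_linesThru (P : PGPoint F) :
    ({ℓ ∈ L | PointOnLine P ℓ} : Set (PGLine F)).ncard = (linesThru L P).card := by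
  rw [Set.ncard_eq_toFinset_card']
  congr 1
  ext ℓ
  simp [linesThru, Set.mem_toFinset]

/-- the pencil count -/
noncomputable def mm (P : PGPoint F) (π : PGPlane F) : ℕ :=
  ((linesIn L π).filter (fun ℓ => PointOnLine P ℓ)).card

lemma ncard_pencil (P : PGPoint F) (π : PGPlane F) :
    ({ℓ ∈ L | PointOnLine P ℓ ∧ LineInPlane ℓ π} : Set (PGLine F)).ncard = mm L P π := by
  rw [Set.ncard_eq_toFinset_card']
  congr 1
  ext ℓ
  simp only [mm, linesIn, Set.mem_toFinset, Set.mem_setOf_eq, Finset.mem_filter,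
    Finset.mem_univ, true_and]
  tauto

/-- (C1) : summing pencil counts over the points of a plane -/
lemma sum_pencil_plane (hF : Fintype.card F = q) (π : PGPlane F) :
    ∑ P ∈ pts π, mm L P π = (q + 1) * (linesIn L π).card := by
  unfold mm
  rw [sum_card_filter_comm (pts π) (linesIn L π) (fun P ℓ => PointOnLine P ℓ)]
  rw [Finset.sum_congr rfl (fun ℓ hℓ => ?_), Finset.sum_const, smul_eq_mul, mul_comm]
  have hmem : ∀ P : PGPoint F, PointOnLine P ℓ → P ∈ pts π := by
    intro P hP
    simp only [pts, Finset.mem_filter, Finset.mem_univ, true_and]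
    simp only [linesIn, Finset.mem_filter] at hℓ
    exact le_trans hP hℓ.2.2
  have : (pts π).filter (fun P => PointOnLine P ℓ)
      = Finset.univ.filter (fun P => PointOnLine P ℓ) := by
    ext P
    simp only [Finset.mem_filter, Finset.mem_univ, true_and]
    exact ⟨fun h => h.2, fun h => ⟨hmem P h, h⟩⟩
  rw [this, card_filter_eq_nat_card]
  exact card_points_on_line hF ℓ

/-- (C2) : summing pencil counts over the planes through a point -/
lemma sum_pencil_point (hF : Fintype.card F = q) (P : PGPoint F) :
    ∑ π ∈ planes P, mm L P π = (q + 1) * (linesThru L P).card := by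
  have hswap : ∀ π : PGPlane F, mm L P π
      = ((linesThru L P).filter (fun ℓ => LineInPlane ℓ π)).card := by
    intro π
    unfold mm linesIn linesThru
    rw [Finset.filter_filter, Finset.filter_filter]
    congr 1
    ext ℓ
    simp only [Finset.mem_filter, Finset.mem_univ, true_and]
    tauto
  simp only [hswap]
  rw [sum_card_filter_comm (planes P) (linesThru L P) (fun π ℓ => LineInPlane ℓ π)]
  rw [Finset.sum_congr rfl (fun ℓ hℓ => ?_), Finset.sum_const, smul_eq_mul, mul_comm]
  have hmem : ∀ π : PGPlane F, LineInPlane ℓ π → π ∈ planes P := by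
    intro π hπ
    simp only [planes, Finset.mem_filter, Finset.mem_univ, true_and]
    simp only [linesThru, Finset.mem_filter] at hℓ
    exact le_trans hℓ.2.2 hπ
  have : (planes P).filter (fun π => LineInPlane ℓ π)
      = Finset.univ.filter (fun π => LineInPlane ℓ π) := by
    ext π
    simp only [Finset.mem_filter, Finset.mem_univ, true_and]
    exact ⟨fun h => h.2, fun h => ⟨hmem π h, h⟩⟩
  rw [this, card_filter_eq_nat_card]
  exact card_planes_through_line hF ℓ

/-- (C3) : pairs of lines of a plane meet in unique points -/
lemma sum_choose_plane (π : PGPlane F) :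
    ∑ P ∈ pts π, (mm L P π).choose 2 = (linesIn L π).card.choose 2 := by
  have inner : ∀ t ∈ (linesIn L π).powersetCard 2,
      ((pts π).filter (fun P => ∀ ℓ ∈ t, PointOnLine P ℓ)).card = 1 := by
    intro t ht
    rw [Finset.mem_powersetCard] at ht
    obtain ⟨hsub, hcard⟩ := ht
    obtain ⟨ℓ₁, ℓ₂, hne, rfl⟩ := Finset.card_eq_two.1 hcard
    have h1 : ℓ₁ ∈ linesIn L π := hsub (by simp)
    have h2 : ℓ₂ ∈ linesIn L π := hsub (by simp)
    simp only [linesIn, Finset.mem_filter] at h1 h2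
    obtain ⟨P₀, ⟨hP1, hP2⟩, huniq⟩ := lines_in_plane_meet hne h1.2.2 h2.2.2
    rw [Finset.card_eq_one]
    refine ⟨P₀, ?_⟩
    ext Q
    simp only [Finset.mem_filter, Finset.mem_singleton]
    constructor
    · rintro ⟨hQpts, hQ⟩
      exact huniq Q ⟨hQ ℓ₁ (by simp), hQ ℓ₂ (by simp)⟩
    · rintro rfl
      refine ⟨?_, ?_⟩
      · simp only [pts, Finset.mem_filter, Finset.mem_univ, true_and]
        exact le_trans hP1 h1.2.2
      · intro ℓ hℓ
        rcases Finset.mem_insert.1 hℓ with rfl | hℓ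
        · exact hP1
        · rw [Finset.mem_singleton.1 hℓ]
          exact hP2
  calc ∑ P ∈ pts π, (mm L P π).choose 2
      = ∑ P ∈ pts π, (((linesIn L π).powersetCard 2).filter
          (fun t => ∀ ℓ ∈ t, PointOnLine P ℓ)).card :=
        Finset.sum_congr rfl (fun P _ => choose_two_filter _ _)
    _ = ∑ t ∈ (linesIn L π).powersetCard 2,
          ((pts π).filter (fun P => ∀ ℓ ∈ t, PointOnLine P ℓ)).card :=
        sum_card_filter_comm _ _ _
    _ = ∑ _t ∈ (linesIn L π).powersetCard 2, 1 := Finset.sum_congr rfl inner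
    _ = (linesIn L π).card.choose 2 := by
        rw [Finset.sum_const, smul_eq_mul, mul_one, Finset.card_powersetCard]

/-- (C4) : pairs of lines through a point span unique planes -/
lemma sum_choose_point (P : PGPoint F) :
    ∑ π ∈ planes P, (mm L P π).choose 2 = (linesThru L P).card.choose 2 := by
  have hswap : ∀ π : PGPlane F, mm L P π
      = ((linesThru L P).filter (fun ℓ => LineInPlane ℓ π)).card := by
    intro π
    unfold mm linesIn linesThru
    rw [Finset.filter_filter, Finset.filter_filter]
    congr 1
    ext ℓ
    simp only [Finset.mem_filter, Finset.mem_univ, true_and]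
    tauto
  have inner : ∀ t ∈ (linesThru L P).powersetCard 2,
      ((planes P).filter (fun π => ∀ ℓ ∈ t, LineInPlane ℓ π)).card = 1 := by
    intro t ht
    rw [Finset.mem_powersetCard] at ht
    obtain ⟨hsub, hcard⟩ := ht
    obtain ⟨ℓ₁, ℓ₂, hne, rfl⟩ := Finset.card_eq_two.1 hcard
    have h1 : ℓ₁ ∈ linesThru L P := hsub (by simp)
    have h2 : ℓ₂ ∈ linesThru L P := hsub (by simp)
    simp only [linesThru, Finset.mem_filter] at h1 h2
    obtain ⟨π₀, ⟨hπ1, hπ2⟩, huniq⟩ := lines_through_point_span hne h1.2.2 h2.2.2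
    rw [Finset.card_eq_one]
    refine ⟨π₀, ?_⟩
    ext σ
    simp only [Finset.mem_filter, Finset.mem_singleton]
    constructor
    · rintro ⟨hσ, hQ⟩
      exact huniq σ ⟨hQ ℓ₁ (by simp), hQ ℓ₂ (by simp)⟩
    · rintro rfl
      refine ⟨?_, ?_⟩
      · simp only [planes, Finset.mem_filter, Finset.mem_univ, true_and]
        exact le_trans h1.2.2 hπ1
      · intro ℓ hℓ
        rcases Finset.mem_insert.1 hℓ with rfl | hℓ
        · exact hπ1
        · rw [Finset.mem_singleton.1 hℓ]
          exact hπ2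
  calc ∑ π ∈ planes P, (mm L P π).choose 2
      = ∑ π ∈ planes P, (((linesThru L P).powersetCard 2).filter
          (fun t => ∀ ℓ ∈ t, LineInPlane ℓ π)).card := by
        refine Finset.sum_congr rfl (fun π _ => ?_)
        rw [hswap π]
        exact choose_two_filter _ _
    _ = ∑ t ∈ (linesThru L P).powersetCard 2,
          ((planes P).filter (fun π => ∀ ℓ ∈ t, LineInPlane ℓ π)).card :=
        sum_card_filter_comm _ _ _
    _ = ∑ _t ∈ (linesThru L P).powersetCard 2, 1 := Finset.sum_congr rfl inner
    _ = (linesThru L P).card.choose 2 := by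
        rw [Finset.sum_const, smul_eq_mul, mul_one, Finset.card_powersetCard]

/-- (C6) : summing a plane function over all incident pairs of a fixed plane -/
lemma sum_planes_over_plane {A : Type*} [AddCommMonoid A] (hF : Fintype.card F = q)
    (π : PGPlane F) (g : PGPlane F → A) :
    ∑ P ∈ pts π, ∑ π' ∈ planes P, g π'
      = (q^2 + q + 1) • g π + (q + 1) • ∑ π' ∈ Finset.univ.erase π, g π' := by
  classical
  have step : ∑ P ∈ pts π, ∑ π' ∈ planes P, g π'
      = ∑ π' : PGPlane F, ((pts π).filter (fun P => PointOnPlane P π')).card • g π' := by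
    unfold planes
    simp only [Finset.sum_filter]
    rw [Finset.sum_comm]
    refine Finset.sum_congr rfl (fun π' _ => ?_)
    rw [← Finset.sum_filter, Finset.sum_const]
  rw [step]
  have hself : ((pts π).filter (fun P => PointOnPlane P π)).card = q^2 + q + 1 := by
    have h1 : (pts π).filter (fun P => PointOnPlane P π) = pts π := by
      ext P
      simp only [pts, Finset.mem_filter, Finset.mem_univ, true_and, and_self]
    rw [h1]
    unfold pts
    rw [card_filter_eq_nat_card]
    exact card_points_on_plane hF π
  have hother : ∀ π' : PGPlane F, π' ≠ π →
      ((pts π).filter (fun P => PointOnPlane P π')).card = q + 1 := by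
    intro π' hne
    have heq : (pts π).filter (fun P => PointOnPlane P π')
        = Finset.univ.filter (fun P => PointOnPlane P π ∧ PointOnPlane P π') := by
      ext P
      simp only [pts, Finset.mem_filter, Finset.mem_univ, true_and]
    rw [heq, card_filter_eq_nat_card]
    exact card_common_points hF (fun h => hne h.symm)
  rw [← Finset.add_sum_erase _ _ (Finset.mem_univ π)]
  congr 1
  · rw [hself]
  · rw [Finset.smul_sum]
    refine Finset.sum_congr rfl (fun π' hπ' => ?_)
    rw [hother π' (Finset.ne_of_mem_erase hπ')]

end incidence

section Tfun

/-- integer binomial T z = z(z-1)/2 -/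
def T (z : ℤ) : ℤ := z * (z - 1) / 2

lemma T_two (z : ℤ) : 2 * T z = z * (z - 1) := by
  have he : Even (z * (z - 1)) := by
    have := Int.even_mul_succ_self (z - 1)
    simpa [mul_comm] using this
  exact Int.mul_ediv_cancel' ((even_iff_two_dvd).1 he)

lemma T_add (u v : ℤ) : T (u + v) = T u + T v + u * v := by
  apply mul_left_cancel₀ (show (2:ℤ) ≠ 0 by norm_num)
  linear_combination T_two (u + v) - T_two u - T_two v

lemma T_sq (z : ℤ) : z * z = 2 * T z + z := by
  rw [T_two]; ring

lemma T_mul (c t : ℤ) : T (c * t) = t * T c + c^2 * T t := by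
  apply mul_left_cancel₀ (show (2:ℤ) ≠ 0 by norm_num)
  linear_combination T_two (c * t) - t * T_two c - c^2 * T_two t

lemma T_natChoose (k : ℕ) : T (k : ℤ) = (k.choose 2 : ℤ) := by
  cases k with
  | zero => rfl
  | succ m =>
    rw [Nat.choose_two_right]
    rw [show (m+1) * (m+1-1) = (m+1) * m from rfl, Int.natCast_div]
    show ((m:ℤ)+1) * ((m:ℤ)+1-1) / 2 = _
    congr 1
    push_cast
    ring

lemma T_split (x : ℕ) (n : ℤ) : T (x : ℤ) + n * (n - x) = T n + T ((x : ℤ) - n) := by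
  apply mul_left_cancel₀ (show (2:ℤ) ≠ 0 by norm_num)
  linear_combination T_two (x : ℤ) - T_two n - T_two ((x:ℤ) - n)

end Tfun

section exist
variable {F : Type*} [Field F] [Fintype F]

lemma exists_plane : Nonempty (PGPlane F) := by
  refine ⟨⟨LinearMap.ker (LinearMap.proj (R := F) (φ := fun _ : Fin 4 => F) 3), ?_⟩⟩
  have h := LinearMap.finrank_range_add_finrank_ker
    (LinearMap.proj (R := F) (φ := fun _ : Fin 4 => F) 3)
  rw [frV] at h
  have hsurj : Function.Surjective (LinearMap.proj (R := F) (φ := fun _ : Fin 4 => F) 3) :=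
    fun y => ⟨fun _ => y, rfl⟩
  rw [LinearMap.range_eq_top.2 hsurj, finrank_top, Module.finrank_self] at h
  omega

end exist

end CLaux

open CLaux

/-- The modular equality: if every plane contains `≡ n (mod q+1)` lines of `L`,
every point lies on `≡ x - n (mod q+1)` lines of `L`, and every incident
point-plane pencil contains exactly `(w+u-x)/(q+1)` lines of `L`, then
`binom(x,2) + n(n-x) ≡ 0 (mod q+1)`. -/
theorem modular_equality {F : Type*} [Field F] [Fintype F] (q : ℕ)
    (hq : Fintype.card F = q) (L : Set (PGLine F)) (x : ℕ) (n : ℤ)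
    (hL : IsCameronLiebler L x)
    (hplane : ∀ π : PGPlane F,
      (({ℓ ∈ L | LineInPlane ℓ π} : Set (PGLine F)).ncard : ℤ) ≡ n [ZMOD (q + 1)])
    (hpoint : ∀ P : PGPoint F,
      (({ℓ ∈ L | PointOnLine P ℓ} : Set (PGLine F)).ncard : ℤ) ≡ (x : ℤ) - n [ZMOD (q + 1)])
    (hpencil : ∀ (π : PGPlane F) (P : PGPoint F), PointOnPlane P π →
      ((q : ℤ) + 1) * (({ℓ ∈ L | PointOnLine P ℓ ∧ LineInPlane ℓ π} : Set (PGLine F)).ncard : ℤ)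
        = (({ℓ ∈ L | LineInPlane ℓ π} : Set (PGLine F)).ncard : ℤ)
          + (({ℓ ∈ L | PointOnLine P ℓ} : Set (PGLine F)).ncard : ℤ) - x) :
    ((x.choose 2 : ℤ) + n * (n - x)) ≡ 0 [ZMOD (q + 1)] := by
  classical
  have hq2 : 2 ≤ q := by rw [← hq]; exact Fintype.one_lt_card
  set M : ℤ := (q : ℤ) + 1 with hMdef
  have hMne : M ≠ 0 := by rw [hMdef]; omega
  obtain ⟨π₀⟩ := (exists_plane : Nonempty (PGPlane F))
  -- decomposition of the line counts
  set b : PGPlane F → ℤ := fun π => (((linesIn L π).card : ℤ) - n) / M with hbdef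
  set a : PGPoint F → ℤ := fun P => (((linesThru L P).card : ℤ) - ((x:ℤ) - n)) / M with hadef
  have hb : ∀ π : PGPlane F, ((linesIn L π).card : ℤ) = n + M * b π := by
    intro π
    have h := hplane π
    rw [ncard_linesIn] at h
    have hd : M ∣ ((linesIn L π).card : ℤ) - n := by
      rw [hMdef]
      exact Int.ModEq.dvd h.symm
    have hmb : M * b π = ((linesIn L π).card : ℤ) - n := by
      rw [hbdef]
      exact Int.mul_ediv_cancel' hd
    linarith
  have ha : ∀ P : PGPoint F, ((linesThru L P).card : ℤ) = ((x:ℤ) - n) + M * a P := by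
    intro P
    have h := hpoint P
    rw [ncard_linesThru] at h
    have hd : M ∣ ((linesThru L P).card : ℤ) - ((x:ℤ) - n) := by
      rw [hMdef]
      exact Int.ModEq.dvd h.symm
    have hmb : M * a P = ((linesThru L P).card : ℤ) - ((x:ℤ) - n) := by
      rw [hadef]
      exact Int.mul_ediv_cancel' hd
    linarith
  have hmabZ : ∀ (P : PGPoint F) (π : PGPlane F), PointOnPlane P π →
      ((mm L P π : ℕ) : ℤ) = a P + b π := by
    intro P π hPo
    have h := hpencil π P hPo
    rw [ncard_pencil, ncard_linesIn, ncard_linesThru, hb π, ha P] at h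
    apply mul_left_cancel₀ hMne
    linear_combination h
  -- facts in ZMod (q+1)
  have hqR : ((q : ℕ) : ZMod (q+1)) = -1 := by
    have h0 : ((q + 1 : ℕ) : ZMod (q+1)) = 0 := ZMod.natCast_self _
    push_cast at h0
    linear_combination h0
  have hMR : ((M : ℤ) : ZMod (q+1)) = 0 := by
    rw [hMdef]
    push_cast
    rw [hqR]
    ring
  have hNcR : ((q^2 + q + 1 : ℕ) : ZMod (q+1)) = 1 := by
    push_cast
    rw [hqR]
    ring
  have hq1R : ((q + 1 : ℕ) : ZMod (q+1)) = 0 := ZMod.natCast_self _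
  -- cardinalities of point sets of planes / plane sets of points
  have hNpts : ∀ π : PGPlane F, (pts (F := F) π).card = q^2 + q + 1 := by
    intro π
    show (Finset.univ.filter (fun P => PointOnPlane P π)).card = _
    rw [card_filter_eq_nat_card]
    exact card_points_on_plane hq π
  have hNpl : ∀ P : PGPoint F, (planes (F := F) P).card = q^2 + q + 1 := by
    intro P
    show (Finset.univ.filter (fun π => PointOnPlane P π)).card = _
    rw [card_filter_eq_nat_card]
    exact card_planes_through_point hq P
  -- abbreviations in ZMod (q+1)
  set β : ZMod (q+1) := ((b π₀ : ℤ) : ZMod (q+1)) with hβdef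
  set α : ZMod (q+1) := ∑ P ∈ pts π₀, ((a P : ℤ) : ZMod (q+1)) with hαdef
  set τ : ZMod (q+1) := ∑ P ∈ pts π₀, ((T (a P) : ℤ) : ZMod (q+1)) with hτdef
  set TM : ZMod (q+1) := ((T M : ℤ) : ZMod (q+1)) with hTMdef
  set Tb0 : ZMod (q+1) := ((T (b π₀) : ℤ) : ZMod (q+1)) with hTb0def
  set Tn : ZMod (q+1) := ((T n : ℤ) : ZMod (q+1)) with hTndef
  set Txn : ZMod (q+1) := ((T ((x:ℤ) - n) : ℤ) : ZMod (q+1)) with hTxndef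
  -- pointwise casts
  have hmmR : ∀ (P : PGPoint F) (π : PGPlane F), PointOnPlane P π →
      ((mm L P π : ℕ) : ZMod (q+1)) = ((a P : ℤ) : ZMod (q+1)) + ((b π : ℤ) : ZMod (q+1)) := by
    intro P π hPo
    have h := congrArg (fun z : ℤ => ((z : ZMod (q+1)))) (hmabZ P π hPo)
    push_cast at h ⊢
    exact h
  have hchooseR : ∀ (P : PGPoint F) (π : PGPlane F), PointOnPlane P π →
      (((mm L P π).choose 2 : ℕ) : ZMod (q+1))
        = ((T (a P) : ℤ) : ZMod (q+1)) + ((T (b π) : ℤ) : ZMod (q+1))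
          + ((a P : ℤ) : ZMod (q+1)) * ((b π : ℤ) : ZMod (q+1)) := by
    intro P π hPo
    have h2 : (((mm L P π).choose 2 : ℕ) : ℤ) = T (a P) + T (b π) + a P * b π := by
      rw [← T_natChoose, hmabZ P π hPo, T_add]
    have h := congrArg (fun z : ℤ => ((z : ZMod (q+1)))) h2
    push_cast at h ⊢
    exact h
  have hmem_pts : ∀ {P : PGPoint F} {π : PGPlane F}, P ∈ pts π → PointOnPlane P π := by
    intro P π hP
    have := Finset.mem_filter.1 hP
    exact this.2
  have hmem_planes : ∀ {P : PGPoint F} {π : PGPlane F}, π ∈ planes P → PointOnPlane P π := by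
    intro P π hP
    have := Finset.mem_filter.1 hP
    exact this.2
  -- (E1) in ZMod
  have e1 : α + β = 0 := by
    have e1N := sum_pencil_plane L hq π₀
    have e1c := congrArg (fun t : ℕ => ((t : ZMod (q+1)))) e1N
    push_cast at e1c
    rw [Finset.sum_congr rfl (fun P hP => hmmR P π₀ (hmem_pts hP))] at e1c
    rw [Finset.sum_add_distrib, Finset.sum_const, hNpts π₀] at e1c
    rw [hqR] at e1c
    rw [hαdef]
    have hsmul : (q^2 + q + 1) • β = ((q^2 + q + 1 : ℕ) : ZMod (q+1)) * β := by
      rw [nsmul_eq_mul]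
    rw [hsmul, hNcR, one_mul] at e1c
    linear_combination e1c
  -- (E2) in ZMod
  have e2 : τ + Tb0 + α * β = Tn + β * TM := by
    have e2N := sum_choose_plane L π₀
    have e2c := congrArg (fun t : ℕ => ((t : ZMod (q+1)))) e2N
    push_cast at e2c
    rw [Finset.sum_congr rfl (fun P hP => hchooseR P π₀ (hmem_pts hP))] at e2c
    rw [Finset.sum_add_distrib, Finset.sum_add_distrib, Finset.sum_const, hNpts π₀,
      ← Finset.sum_mul] at e2c
    have hW : (((linesIn L π₀).card.choose 2 : ℕ) : ZMod (q+1)) = Tn + β * TM := by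
      have h2 : (((linesIn L π₀).card.choose 2 : ℕ) : ℤ)
          = T n + (b π₀ * T M + M^2 * T (b π₀)) + n * (M * b π₀) := by
        rw [← T_natChoose, hb π₀, T_add, T_mul]
      have h := congrArg (fun z : ℤ => ((z : ZMod (q+1)))) h2
      push_cast at h
      rw [hMR] at h
      rw [hTndef, hβdef, hTMdef]
      push_cast
      rw [h]
      ring
    rw [hW] at e2c
    have hsmul : (q^2 + q + 1) • Tb0 = ((q^2 + q + 1 : ℕ) : ZMod (q+1)) * Tb0 := by
      rw [nsmul_eq_mul]
    rw [hsmul, hNcR, one_mul] at e2c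
    rw [hτdef, hαdef]
    linear_combination e2c
  -- (E3) in ZMod : per point
  have hBR : ∀ P : PGPoint F,
      ∑ π ∈ planes P, ((b π : ℤ) : ZMod (q+1)) = -((a P : ℤ) : ZMod (q+1)) := by
    intro P
    have e3N := sum_pencil_point L hq P
    have e3c := congrArg (fun t : ℕ => ((t : ZMod (q+1)))) e3N
    push_cast at e3c
    rw [Finset.sum_congr rfl (fun π hπ => hmmR P π (hmem_planes hπ))] at e3c
    rw [Finset.sum_add_distrib, Finset.sum_const, hNpl P] at e3c
    rw [hqR] at e3c
    have hsmul : (q^2 + q + 1) • ((a P : ℤ) : ZMod (q+1))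
        = ((q^2 + q + 1 : ℕ) : ZMod (q+1)) * ((a P : ℤ) : ZMod (q+1)) := by
      rw [nsmul_eq_mul]
    rw [hsmul, hNcR, one_mul] at e3c
    linear_combination e3c
  -- (E4) in ZMod : per point
  have hSR : ∀ P : PGPoint F,
      ∑ π ∈ planes P, ((T (b π) : ℤ) : ZMod (q+1))
        = Txn + ((a P : ℤ) : ZMod (q+1)) * TM + ((T (a P) : ℤ) : ZMod (q+1))
          + ((a P : ℤ) : ZMod (q+1)) := by
    intro P
    have e4N := sum_choose_point L P
    have e4c := congrArg (fun t : ℕ => ((t : ZMod (q+1)))) e4N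
    push_cast at e4c
    rw [Finset.sum_congr rfl (fun π hπ => hchooseR P π (hmem_planes hπ))] at e4c
    rw [Finset.sum_add_distrib, Finset.sum_add_distrib, Finset.sum_const, hNpl P,
      ← Finset.mul_sum] at e4c
    rw [hBR P] at e4c
    have hU : (((linesThru L P).card.choose 2 : ℕ) : ZMod (q+1))
        = Txn + ((a P : ℤ) : ZMod (q+1)) * TM := by
      have h2 : (((linesThru L P).card.choose 2 : ℕ) : ℤ)
          = T ((x:ℤ) - n) + (a P * T M + M^2 * T (a P)) + ((x:ℤ) - n) * (M * a P) := by
        rw [← T_natChoose, ha P, T_add, T_mul]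
      have h := congrArg (fun z : ℤ => ((z : ZMod (q+1)))) h2
      push_cast at h
      rw [hMR] at h
      rw [hTxndef, hTMdef]
      push_cast
      rw [h]
      ring
    rw [hU] at e4c
    have hsmul : (q^2 + q + 1) • ((T (a P) : ℤ) : ZMod (q+1))
        = ((q^2 + q + 1 : ℕ) : ZMod (q+1)) * ((T (a P) : ℤ) : ZMod (q+1)) := by
      rw [nsmul_eq_mul]
    rw [hsmul, hNcR, one_mul] at e4c
    -- e4c : T(aP) + Σ T(b π) + aP * (−aP) = Txn + aP * TM
    have hsq : ((a P : ℤ) : ZMod (q+1)) * ((a P : ℤ) : ZMod (q+1))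
        = 2 * ((T (a P) : ℤ) : ZMod (q+1)) + ((a P : ℤ) : ZMod (q+1)) := by
      have h := congrArg (fun z : ℤ => ((z : ZMod (q+1)))) (T_sq (a P))
      push_cast at h
      exact h
    linear_combination e4c + hsq
  -- (E6) in ZMod : sum over the points of π₀
  have e6 : Tb0 = Txn + α * TM + τ + α := by
    have e6N := sum_planes_over_plane (A := ZMod (q+1)) hq π₀
      (fun π => ((T (b π) : ℤ) : ZMod (q+1)))
    rw [Finset.sum_congr rfl (fun P (_ : P ∈ pts π₀) => hSR P)] at e6N
    rw [Finset.sum_add_distrib, Finset.sum_add_distrib, Finset.sum_add_distrib,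
      Finset.sum_const, hNpts π₀, ← Finset.sum_mul] at e6N
    have hsmul1 : (q^2 + q + 1) • Txn = ((q^2 + q + 1 : ℕ) : ZMod (q+1)) * Txn := by
      rw [nsmul_eq_mul]
    have hsmul2 : (q^2 + q + 1) • Tb0 = ((q^2 + q + 1 : ℕ) : ZMod (q+1)) * Tb0 := by
      rw [nsmul_eq_mul]
    have hsmul3 : (q + 1) • (∑ π' ∈ Finset.univ.erase π₀, ((T (b π') : ℤ) : ZMod (q+1)))
        = ((q + 1 : ℕ) : ZMod (q+1))
          * (∑ π' ∈ Finset.univ.erase π₀, ((T (b π') : ℤ) : ZMod (q+1))) := by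
      rw [nsmul_eq_mul]
    rw [hsmul1, hsmul2, hsmul3, hNcR, hq1R, one_mul, one_mul, zero_mul, add_zero] at e6N
    rw [hτdef, hαdef]
    linear_combination -e6N
  -- (E8) in ZMod
  have e8 : β * β = 2 * Tb0 + β := by
    have h := congrArg (fun z : ℤ => ((z : ZMod (q+1)))) (T_sq (b π₀))
    push_cast at h
    rw [hβdef, hTb0def]
    exact h
  -- combine
  have key : Tn + Txn = 0 := by
    linear_combination (-1 : ZMod (q+1)) * e2 - e6 - e8 + (β - TM - 1) * e1
  -- back to divisibility
  have keyZ : (((T n + T ((x:ℤ) - n)) : ℤ) : ZMod (q+1)) = 0 := by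
    push_cast
    rw [hTndef, hTxndef] at key
    push_cast at key
    linear_combination key
  have hdvd : (((q + 1 : ℕ)) : ℤ) ∣ (T n + T ((x:ℤ) - n)) :=
    (ZMod.intCast_zmod_eq_zero_iff_dvd _ _).1 keyZ
  have hdvd' : ((q : ℤ) + 1) ∣ ((x.choose 2 : ℤ) + n * (n - (x:ℤ))) := by
    rw [← T_natChoose, T_split]
    exact_mod_cast hdvd
  exact Int.modEq_zero_iff_dvd.mpr hdvd'
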